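/- arXiv:gr-qc/0110081 — 4 statements merged into one kernel-verified Lean document; each statement's English description precedes it below -/
import Mathlib

section
/- Let A, N, λ : ℝ → ℝ be 1-periodic functions with N twice continuously differentiable, A continuously differentiable and everywhere positive, λ continuous and everywhere positive, and suppose N''(x) = −A(x)^{−1}A'(x)N'(x) + A(x)²N(x)λ(x) − A(x)² for all x ∈ ℝ. Then there exists a point x₀ at which N attains its maximum, and N(x) ≤ N(x₀) ≤ λ(x₀)^{−1} for all x ∈ ℝ; in particular N(x) ≤ sup_y λ(y)^{−1} for all x. -/
/-!
At a maximum point `x₀` of the periodic function `N` we have `N' x₀ = 0` and `N'' x₀ ≤ 0`, so the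
lapse equation reduces there to `A x₀ ^ 2 * (N x₀ * λ x₀ - 1) ≤ 0`, i.e. `N x₀ ≤ (λ x₀)⁻¹`.
-/

open Filter Topology

theorem Function.Periodic.exists_forall_le_of_continuous {f : ℝ → ℝ} {c : ℝ}
    (hp : Function.Periodic f c) (hc : c ≠ 0) (hf : Continuous f) :
    ∃ x₀, ∀ x, f x ≤ f x₀ := by
  obtain ⟨_, ⟨x₀, rfl⟩, hmax⟩ :=
    (hp.compact_of_continuous hc hf).exists_isGreatest (Set.range_nonempty f)
  exact ⟨x₀, fun x => hmax ⟨x, rfl⟩⟩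

/-- No differentiability is needed: where `deriv f` is not differentiable, `deriv (deriv f)` is
the junk value `0`. -/
theorem IsLocalMax.deriv_deriv_nonpos {f : ℝ → ℝ} {x₀ : ℝ} (hmax : IsLocalMax f x₀)
    (hc : ContinuousAt f x₀) : deriv (deriv f) x₀ ≤ 0 := by
  by_contra! hpos
  have hmin : IsLocalMin f x₀ := isLocalMin_of_deriv_deriv_pos hpos hmax.deriv_eq_zero hc
  have hconst : f =ᶠ[𝓝 x₀] fun _ => f x₀ :=
    (hmax.and hmin).mono fun _ hx => le_antisymm hx.1 hx.2
  have hderiv : deriv f =ᶠ[𝓝 x₀] fun _ => 0 :=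
    hconst.eventuallyEq_nhds.mono fun _ hx => by rw [hx.deriv_eq, deriv_const]
  rw [hderiv.deriv_eq, deriv_const] at hpos
  exact hpos.false

theorem lapse_maximum_principle_general
    (A N lam : ℝ → ℝ)
    (hNper : Function.Periodic N 1)
    (hlamper : Function.Periodic lam 1)
    (hN : ContDiff ℝ 2 N) (hApos : ∀ x, 0 < A x)
    (hlamcont : Continuous lam) (hlampos : ∀ x, 0 < lam x)
    (heq : ∀ x, deriv (deriv N) x =
      -(A x)⁻¹ * deriv A x * deriv N x + (A x) ^ 2 * N x * lam x - (A x) ^ 2) :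
    ∃ x₀ : ℝ, (∀ x, N x ≤ N x₀) ∧ N x₀ ≤ (lam x₀)⁻¹ ∧
      ∀ x, N x ≤ ⨆ y, (lam y)⁻¹ := by
  obtain ⟨x₀, hmax⟩ := hNper.exists_forall_le_of_continuous one_ne_zero hN.continuous
  have hlocmax : IsLocalMax N x₀ := Eventually.of_forall hmax
  have hN'' := hlocmax.deriv_deriv_nonpos hN.continuous.continuousAt
  rw [heq, hlocmax.deriv_eq_zero] at hN''
  have hA2 : 0 < A x₀ ^ 2 := pow_pos (hApos x₀) 2
  have hle : N x₀ ≤ (lam x₀)⁻¹ := by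
    rw [← one_div, le_div_iff₀ (hlampos x₀)]
    nlinarith
  obtain ⟨y₀, hinvmax⟩ := (hlamper.comp Inv.inv).exists_forall_le_of_continuous one_ne_zero
    (hlamcont.inv₀ fun y => (hlampos y).ne')
  have hbdd : BddAbove (Set.range fun y => (lam y)⁻¹) :=
    ⟨_, Set.forall_mem_range.2 hinvmax⟩
  exact ⟨x₀, hmax, hle, fun x => (hmax x).trans (hle.trans (le_ciSup hbdd x₀))⟩

/-- Maximum-principle estimate for the lapse equation of a PMC foliation on the circle:
if `N'' = -A⁻¹ A' N' + A² N λ - A²` with `A > 0`, `λ > 0`, all data `1`-periodic, then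
`N` attains its maximum at some `x₀` and `N ≤ N x₀ ≤ (λ x₀)⁻¹ ≤ sup (λ ·)⁻¹`. -/
theorem lapse_maximum_principle
    (A N lam : ℝ → ℝ)
    (hAper : Function.Periodic A 1) (hNper : Function.Periodic N 1)
    (hlamper : Function.Periodic lam 1)
    (hN : ContDiff ℝ 2 N) (hA : ContDiff ℝ 1 A) (hApos : ∀ x, 0 < A x)
    (hlamcont : Continuous lam) (hlampos : ∀ x, 0 < lam x)
    (heq : ∀ x, deriv (deriv N) x =
      -(A x)⁻¹ * deriv A x * deriv N x + (A x) ^ 2 * N x * lam x - (A x) ^ 2) :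
    ∃ x₀ : ℝ, (∀ x, N x ≤ N x₀) ∧ N x₀ ≤ (lam x₀)⁻¹ ∧
      ∀ x, N x ≤ ⨆ y, (lam y)⁻¹ :=
  lapse_maximum_principle_general A N lam hNper hlamper hN hApos hlamcont hlampos heq
end

section
/- Let A : ℝ → ℝ be continuously differentiable, 1-periodic and everywhere positive, N : ℝ → ℝ twice continuously differentiable and 1-periodic, and g : ℝ → ℝ continuous and 1-periodic, with N''(x) = −A(x)^{−1}A'(x)N'(x) + g(x) for all x. If |g(x)| ≤ M and |A(x)^{−1}A'(x)| ≤ β for all x, then |N'(x)| ≤ M e^{β} for all x ∈ ℝ. -/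
/-!
Since `N` is periodic, Rolle's theorem gives a zero `x₀` of `N'`. The lapse equation makes
`N'` satisfy `|N''| ≤ β |N'| + M`, so Grönwall's inequality on `[x₀, x₀ + 1]` bounds `|N'|` by
`gronwallBound 0 β M 1 ≤ M e^β` there, and periodicity of `N'` carries the bound to all of `ℝ`.
-/

open Real Set

theorem gronwallBound_zero_le {K ε x : ℝ} (hK : 0 ≤ K) (hε : 0 ≤ ε) :
    gronwallBound 0 K ε x ≤ ε * x * exp (K * x) := by
  rcases hK.eq_or_lt with rfl | hK
  · simp [gronwallBound_K0]
  -- `e^{Kx} - 1 ≤ Kx e^{Kx}` is `1 - Kx ≤ e^{-Kx}` multiplied by `e^{Kx}`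
  have hexp : exp (K * x) - 1 ≤ K * x * exp (K * x) := by
    have h := add_one_le_exp (-(K * x))
    have hinv : exp (-(K * x)) * exp (K * x) = 1 := by rw [← exp_add, neg_add_cancel, exp_zero]
    nlinarith [exp_pos (K * x)]
  calc gronwallBound 0 K ε x = ε / K * (exp (K * x) - 1) := by
        simp [gronwallBound_of_K_ne_0 hK.ne']
    _ ≤ ε / K * (K * x * exp (K * x)) := by gcongr
    _ = ε * x * exp (K * x) := by field_simp

theorem Function.Periodic.deriv {𝕜 F : Type*} [NontriviallyNormedField 𝕜] [NormedAddCommGroup F]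
    [NormedSpace 𝕜 F] {f : 𝕜 → F} {c : 𝕜} (hf : Function.Periodic f c) :
    Function.Periodic (_root_.deriv f) c := fun x => by
  rw [← deriv_comp_add_const, funext hf]

theorem Function.Periodic.exists_deriv_eq_zero {f : ℝ → ℝ} {c : ℝ} (hf : Function.Periodic f c)
    (hc : 0 < c) (hfc : Continuous f) : ∃ x, _root_.deriv f x = 0 := by
  obtain ⟨x, -, hx⟩ := _root_.exists_deriv_eq_zero hc hfc.continuousOn (by simpa using (hf 0).symm)
  exact ⟨x, hx⟩

theorem Function.Periodic.norm_le_of_norm_deriv_le {E : Type*} [NormedAddCommGroup E]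
    [NormedSpace ℝ E] {f f' : ℝ → E} {c K ε x₀ : ℝ} (hf : Function.Periodic f c) (hc : 0 < c)
    (hderiv : ∀ x, HasDerivAt f (f' x) x) (hx₀ : f x₀ = 0) (hK : 0 ≤ K)
    (bound : ∀ x, ‖f' x‖ ≤ K * ‖f x‖ + ε) (x : ℝ) :
    ‖f x‖ ≤ ε * c * exp (K * c) := by
  have hε : 0 ≤ ε := by simpa [hx₀] using (norm_nonneg _).trans (bound x₀)
  have gronwall := norm_le_gronwallBound_of_norm_deriv_right_le (δ := 0) (a := x₀) (b := x₀ + c)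
    (fun y _ => (hderiv y).continuousAt.continuousWithinAt)
    (fun y _ => (hderiv y).hasDerivWithinAt) (by simp [hx₀]) (fun y _ => bound y)
  obtain ⟨y, hy, hxy⟩ := hf.exists_mem_Ico hc x x₀
  calc ‖f x‖ = ‖f y‖ := by rw [hxy]
    _ ≤ gronwallBound 0 K ε (y - x₀) := gronwall y (Ico_subset_Icc_self hy)
    _ ≤ gronwallBound 0 K ε c := gronwallBound_mono le_rfl hε hK (by linarith [hy.2])
    _ ≤ ε * c * exp (K * c) := gronwallBound_zero_le hK hε

theorem lapse_spatial_derivative_bound_general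
    (A N g : ℝ → ℝ) (M β : ℝ)
    (hN : ContDiff ℝ 2 N) (hNper : Function.Periodic N 1)
    (heq : ∀ x, deriv (deriv N) x = -(A x)⁻¹ * deriv A x * deriv N x + g x)
    (hgM : ∀ x, |g x| ≤ M) (hAβ : ∀ x, |(A x)⁻¹ * deriv A x| ≤ β) :
    ∀ x, |deriv N x| ≤ M * Real.exp β := by
  intro x
  have hβ : 0 ≤ β := (abs_nonneg _).trans (hAβ 0)
  have hN' : Differentiable ℝ (deriv N) := (hN.deriv' (n := 1)).differentiable one_ne_zero
  obtain ⟨x₀, hx₀⟩ := hNper.exists_deriv_eq_zero one_pos hN.continuous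
  have bound (y : ℝ) : ‖deriv (deriv N) y‖ ≤ β * ‖deriv N y‖ + M := by
    rw [heq, Real.norm_eq_abs, Real.norm_eq_abs]
    calc |-(A y)⁻¹ * deriv A y * deriv N y + g y|
        ≤ |-(A y)⁻¹ * deriv A y * deriv N y| + |g y| := abs_add_le _ _
      _ = |(A y)⁻¹ * deriv A y| * |deriv N y| + |g y| := by rw [neg_mul, neg_mul, abs_neg, abs_mul]
      _ ≤ β * |deriv N y| + M := by gcongr; exacts [hAβ y, hgM y]
  simpa using hNper.deriv.norm_le_of_norm_deriv_le one_pos (fun y => (hN' y).hasDerivAt) hx₀ hβ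
    bound x

/-- Gronwall estimate for the spatial derivative of the lapse on the circle:
if `N'' = -A⁻¹ A' N' + g` with `|g| ≤ M` and `|A⁻¹ A'| ≤ β`, all data `1`-periodic,
then `|N'| ≤ M e^β`. -/
theorem lapse_spatial_derivative_bound
    (A N g : ℝ → ℝ) (M β : ℝ)
    (hA : ContDiff ℝ 1 A) (hAper : Function.Periodic A 1) (hApos : ∀ x, 0 < A x)
    (hN : ContDiff ℝ 2 N) (hNper : Function.Periodic N 1)
    (hg : Continuous g) (hgper : Function.Periodic g 1)
    (heq : ∀ x, deriv (deriv N) x = -(A x)⁻¹ * deriv A x * deriv N x + g x)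
    (hgM : ∀ x, |g x| ≤ M) (hAβ : ∀ x, |(A x)⁻¹ * deriv A x| ≤ β) :
    ∀ x, |deriv N x| ≤ M * Real.exp β :=
  lapse_spatial_derivative_bound_general A N g M β hN hNper heq hgM hAβ
end

section
/- Let L > 0 and C ≥ 0, and let f : ℝ → ℝ be differentiable and L-periodic with f'(x) ≥ −C for all x ∈ ℝ, and suppose f(q) = 0 for some q ∈ ℝ. Then |f(x)| ≤ C·L for all x ∈ ℝ. -/
/-- One-sided derivative bound on the circle: if `f` is differentiable, `L`-periodic,
satisfies `f' ≥ -C`, and vanishes somewhere, then `|f| ≤ C·L`. -/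
theorem periodic_one_sided_derivative_bound
    (L C : ℝ) (hL : 0 < L) (hC : 0 ≤ C)
    (f : ℝ → ℝ) (hf : Differentiable ℝ f) (hfper : Function.Periodic f L)
    (hf' : ∀ x, deriv f x ≥ -C) (q : ℝ) (hq : f q = 0) :
    ∀ x, |f x| ≤ C * L := by
  -- g = f + C x is monotone
  set g : ℝ → ℝ := fun x => f x + C * x with hg
  have hgdiff : Differentiable ℝ g := hf.add (differentiable_id.const_mul C)
  have hgmono : Monotone g := by
    apply monotone_of_deriv_nonneg hgdiff
    intro x
    have : deriv g x = deriv f x + C := by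
      have h1 : HasDerivAt g (deriv f x + C * 1) x :=
        (hf x).hasDerivAt.add ((hasDerivAt_id x).const_mul C)
      simpa using h1.deriv
    rw [this]
    linarith [hf' x]
  -- quasi-monotone: a ≤ b → f b - f a ≥ -C*(b-a)
  have key : ∀ a b : ℝ, a ≤ b → f a ≤ f b + C * (b - a) := by
    intro a b hab
    have := hgmono hab
    simp only [hg] at this
    linarith
  intro x
  rw [abs_le]
  constructor
  · -- lower bound: take q' = q + n*L ≤ x with x - q' < L
    obtain ⟨n, h1, h2⟩ : ∃ n : ℤ, q + n * L ≤ x ∧ x - (q + n * L) < L := by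
      refine ⟨⌊(x - q)/L⌋, ?_, ?_⟩ <;>
      · have h1 := Int.floor_le ((x - q)/L)
        have h2 := Int.lt_floor_add_one ((x - q)/L)
        have heq : (x - q)/L * L = x - q := div_mul_cancel₀ _ hL.ne'
        nlinarith
    have hz : f (q + n * L) = 0 := by
      rw [(hfper.int_mul n) q, hq]
    have := key (q + n * L) x h1
    rw [hz] at this
    nlinarith
  · -- upper bound: take q' = q + n*L ≥ x with q' - x < L
    obtain ⟨n, h1, h2⟩ : ∃ n : ℤ, x ≤ q + n * L ∧ (q + n * L) - x < L := by
      refine ⟨⌈(x - q)/L⌉, ?_, ?_⟩ <;>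
      · have h1 := Int.le_ceil ((x - q)/L)
        have h2 := Int.ceil_lt_add_one ((x - q)/L)
        have heq : (x - q)/L * L = x - q := div_mul_cancel₀ _ hL.ne'
        nlinarith
    have hz : f (q + n * L) = 0 := by
      rw [(hfper.int_mul n) q, hq]
    have := key x (q + n * L) h1
    rw [hz] at this
    nlinarith
end

section
/- There are no functions with the following properties: A : ℝ → ℝ twice continuously differentiable, 1-periodic and everywhere positive; H, K, ρ : ℝ → ℝ continuous and 1-periodic with ρ(x) ≥ 0 and 0 ≤ H(x) < K(x) for all x; a constant a > 0 and a real number ε ≤ 0; such that the Hamiltonian constraint (A^{1/2})''(x) = (1/8)A(x)^{5/2}(H(x)² − (1/2)(H(x)−K(x))² − K(x)² − 16πρ(x)) + (1/4)A(x)^{1/2}a^{−2}ε holds for all x ∈ ℝ. -/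
open Real

/-- In expanding surface-symmetric spacetimes (ε ≤ 0) the mean curvature cannot satisfy
`0 ≤ H < K` everywhere: no such solution of the Hamiltonian constraint exists. -/
theorem no_nonnegative_mean_curvature_expanding :
    ¬ ∃ (A H K ρ : ℝ → ℝ) (a ε : ℝ),
      ContDiff ℝ 2 A ∧ Function.Periodic A 1 ∧ (∀ x, 0 < A x) ∧
      Continuous H ∧ Function.Periodic H 1 ∧
      Continuous K ∧ Function.Periodic K 1 ∧
      Continuous ρ ∧ Function.Periodic ρ 1 ∧
      (∀ x, 0 ≤ ρ x) ∧ (∀ x, 0 ≤ H x ∧ H x < K x) ∧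
      0 < a ∧ ε ≤ 0 ∧
      (∀ x, deriv (deriv (fun y => Real.sqrt (A y))) x =
        (1/8) * (A x) ^ ((5:ℝ)/2) *
          ((H x) ^ 2 - (1/2) * (H x - K x) ^ 2 - (K x) ^ 2 - 16 * π * ρ x)
        + (1/4) * (A x) ^ ((1:ℝ)/2) * (a ^ 2)⁻¹ * ε) := by
  rintro ⟨A, H, K, ρ, a, ε, hA2, hAper, hApos, hH, hHper, hK, hKper, hρ, hρper,
    hρ0, hHK, ha, hε, heq⟩
  set f : ℝ → ℝ := fun y => Real.sqrt (A y) with hf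
  -- f'' < 0 everywhere
  have hneg : ∀ x, deriv (deriv f) x < 0 := by
    intro x
    rw [heq x]
    have h1 : 0 ≤ H x := (hHK x).1
    have h2 : H x < K x := (hHK x).2
    have hbr : (H x) ^ 2 - (1/2) * (H x - K x) ^ 2 - (K x) ^ 2 - 16 * π * ρ x < 0 := by
      nlinarith [Real.pi_pos, hρ0 x, sq_nonneg (H x - K x)]
    have hA52 : 0 < (A x) ^ ((5:ℝ)/2) := Real.rpow_pos_of_pos (hApos x) _
    have hA12 : 0 < (A x) ^ ((1:ℝ)/2) := Real.rpow_pos_of_pos (hApos x) _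
    have t1 : 1/8 * (A x) ^ ((5:ℝ)/2) *
        ((H x) ^ 2 - (1/2) * (H x - K x) ^ 2 - (K x) ^ 2 - 16 * π * ρ x) < 0 :=
      mul_neg_of_pos_of_neg (by positivity) hbr
    have t2 : 1/4 * (A x) ^ ((1:ℝ)/2) * (a ^ 2)⁻¹ * ε ≤ 0 :=
      mul_nonpos_of_nonneg_of_nonpos (by positivity) hε
    linarith
  -- f is periodic
  have hfper : Function.Periodic f 1 := fun x => by simp [hf, hAper x]
  -- deriv f is periodic
  have hdper : Function.Periodic (deriv f) 1 := by
    intro x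
    have : (fun y => f (y + 1)) = f := funext hfper
    calc deriv f (x + 1) = deriv (fun y => f (y + 1)) x := (deriv_comp_add_const f 1 x).symm
      _ = deriv f x := by rw [this]
  have hanti : StrictAnti (deriv f) := strictAnti_of_deriv_neg hneg
  have := hanti (show (0:ℝ) < 1 by norm_num)
  rw [show (1:ℝ) = 0 + 1 by ring, hdper 0] at this
  exact lt_irrefl _ this
end
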